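/- arXiv:2306.04200 — 2 statements merged into one kernel-verified Lean document; each statement's English description precedes it below -/
import Mathlib

section
/- Let R ≅ F₁ × F₂ × ⋯ × Fₙ (n ≥ 3) be a product of fields. Then any two distinct vertices I and J of PIS(R) have distinct open neighborhoods: N(I) ≠ N(J). -/
/-! In a zero-dimensional ring the prime ideals are exactly the maximal ones, so `I` and `J` are
adjacent in `PIS R` iff `I ⊔ J` is a coatom of the ideal lattice. For `R = Πᵢ Fᵢ` this lattice is
the power set of the index set, whose coatoms are the complements `{k}ᶜ` of points.

Suppose `s ≠ t` have the same neighbours and `a ∈ t \ s`. Then `{a}ᶜ` is a neighbour of `s` unless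
`s = {a}ᶜ`, and is never a neighbour of `t`; so `s = {a}ᶜ`, and symmetrically `t = {b}ᶜ`. Now the
singleton `{b}`, which differs from `s` because there is a third index, is adjacent to `s` but
not to `t`. -/

open SimpleGraph

/-- The prime ideal sum graph of a commutative ring. -/
def PIS (R : Type*) [CommRing R] :
    SimpleGraph {I : Ideal R // I ≠ ⊥ ∧ I ≠ ⊤} where
  Adj I J := I ≠ J ∧ (I.1 + J.1).IsPrime
  symm := by
    refine ⟨?_⟩
    rintro I J ⟨hne, hp⟩
    exact ⟨hne.symm, by rwa [add_comm]⟩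
  loopless := by refine ⟨?_⟩; rintro I ⟨hne, -⟩; exact hne rfl

open Function Set

theorem SimpleGraph.Iso.neighborSet_injective {V W : Type*} {G : SimpleGraph V}
    {G' : SimpleGraph W} (φ : G ≃g G') (h : Injective G'.neighborSet) :
    Injective G.neighborSet := by
  intro v w hvw
  apply φ.injective
  apply h
  simp [← φ.symm.toEmbedding.preimage_neighborSet, hvw]

noncomputable def OrderIso.piSimpleOrderSet {ι : Type*} (A : ι → Type*)
    [∀ i, PartialOrder (A i)] [∀ i, BoundedOrder (A i)] [∀ i, IsSimpleOrder (A i)] :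
    (∀ i, A i) ≃o Set ι where
  toFun a := {i | a i = ⊤}
  invFun s i := by classical exact if i ∈ s then ⊤ else ⊥
  left_inv a := funext fun i => by
    rcases eq_bot_or_eq_top (a i) with h | h <;> simp [h]
  right_inv s := by ext i; by_cases hi : i ∈ s <;> simp [hi]
  map_rel_iff' {a b} := by
    simp only [Equiv.coe_fn_mk, Set.ofPred_subset_ofPred, Pi.le_def]
    refine forall_congr' fun i => ?_
    rcases eq_bot_or_eq_top (a i) with h | h <;> simp [h]

def coatomSupGraph (L : Type*) [Lattice L] [BoundedOrder L] :
    SimpleGraph {x : L // x ≠ ⊥ ∧ x ≠ ⊤} where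
  Adj x y := x ≠ y ∧ IsCoatom (x.1 ⊔ y.1)
  symm := ⟨fun _ _ h => ⟨h.1.symm, sup_comm (α := L) _ _ ▸ h.2⟩⟩
  loopless := ⟨fun _ h => h.1 rfl⟩

theorem PIS_eq_coatomSupGraph (R : Type*) [CommRing R] [Ring.KrullDimLE 0 R] :
    PIS R = coatomSupGraph (Ideal R) := by
  ext I J
  simp only [PIS, coatomSupGraph, Submodule.add_eq_sup, ← Ideal.isMaximal_iff_isPrime,
    Ideal.isMaximal_def]

namespace coatomSupGraph

section Lattice

variable {L L' : Type*} [Lattice L] [BoundedOrder L] [Lattice L'] [BoundedOrder L']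

def isoOfOrderIso (e : L ≃o L') : coatomSupGraph L ≃g coatomSupGraph L' where
  toEquiv := e.toEquiv.subtypeEquiv fun x => by simp
  map_rel_iff' {x y} := by
    simp only [coatomSupGraph, Equiv.subtypeEquiv_apply, OrderIso.coe_toEquiv, ne_eq,
      Subtype.ext_iff, e.injective.eq_iff, ← e.map_sup, e.isCoatom_iff]

theorem not_adj_of_sup_eq_top {x y : {x : L // x ≠ ⊥ ∧ x ≠ ⊤}} (h : x.1 ⊔ y.1 = ⊤) :
    ¬ (coatomSupGraph L).Adj x y :=
  fun hxy => hxy.2.ne_top h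

end Lattice

section Set

variable {α : Type*}

theorem eq_compl_singleton_of_neighborSet_eq [Nontrivial α]
    {s t : {x : Set α // x ≠ ⊥ ∧ x ≠ ⊤}}
    (hst : (coatomSupGraph (Set α)).neighborSet s = (coatomSupGraph (Set α)).neighborSet t)
    {a : α} (has : a ∉ s.1) (hat : a ∈ t.1) : s.1 = {a}ᶜ := by
  by_contra hs
  let u : {x : Set α // x ≠ ⊥ ∧ x ≠ ⊤} := ⟨{a}ᶜ, by simp, by simp⟩
  have hsu : (coatomSupGraph (Set α)).Adj s u := by
    refine ⟨fun h => hs (congrArg Subtype.val h), ?_⟩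
    rw [sup_eq_right.2 (subset_compl_singleton_iff.2 has), Set.isCoatom_iff]
    exact ⟨a, rfl⟩
  have htu : (coatomSupGraph (Set α)).Adj t u := (Set.ext_iff.1 hst u).1 hsu
  refine not_adj_of_sup_eq_top (eq_univ_of_forall fun x => ?_) htu
  by_cases hx : x = a <;> simp [u, hx, hat]

theorem neighborSet_injective_of_three_le_card (h : 3 ≤ ENat.card α) :
    Injective (coatomSupGraph (Set α)).neighborSet := by
  have : Nontrivial α := (ENat.one_lt_card_iff_nontrivial α).1 (lt_of_lt_of_le (by norm_num) h)
  intro s t hst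
  by_contra hne
  wlog hts : ∃ a ∈ t.1, a ∉ s.1 generalizing s t
  · push Not at hts
    obtain ⟨a, has, hat⟩ : ∃ a ∈ s.1, a ∉ t.1 := by
      by_contra! hst'
      exact hne (Subtype.ext (subset_antisymm hst' hts))
    exact this hst.symm (Ne.symm hne) ⟨a, has, hat⟩
  obtain ⟨a, hat, has⟩ := hts
  have hs := eq_compl_singleton_of_neighborSet_eq hst has hat
  obtain ⟨b, hbt⟩ : ∃ b, b ∉ t.1 := by simpa [eq_univ_iff_forall] using t.2.2
  have hbs : b ∈ s.1 := by rw [hs]; rintro rfl; exact hbt hat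
  have ht := eq_compl_singleton_of_neighborSet_eq hst.symm hbt hbs
  obtain ⟨c, hca, hcb⟩ := ENat.exists_ne_ne_of_three_le h a b
  let u : {x : Set α // x ≠ ⊥ ∧ x ≠ ⊤} :=
    ⟨{b}, by simp, (ne_univ_iff_exists_notMem _).2 ⟨c, hcb⟩⟩
  have hsu : (coatomSupGraph (Set α)).Adj s u := by
    refine ⟨fun h => hcb ?_, ?_⟩
    · have hc : c ∈ s.1 := by rw [hs]; exact hca
      rwa [h] at hc
    · rw [sup_eq_left.2 (singleton_subset_iff.2 hbs), hs, Set.isCoatom_iff]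
      exact ⟨a, rfl⟩
  have htu : (coatomSupGraph (Set α)).Adj t u := (Set.ext_iff.1 hst u).1 hsu
  refine not_adj_of_sup_eq_top ?_ htu
  simp [u, ht]

end Set

end coatomSupGraph

theorem PIS_neighborSet_injective_pi {ι : Type*} [Finite ι] (hι : 3 ≤ ENat.card ι)
    (F : ι → Type*) [∀ i, Field (F i)] : Injective (PIS (∀ i, F i)).neighborSet := by
  let e : Ideal (∀ i, F i) ≃o Set ι := Ideal.piOrderIso.trans (OrderIso.piSimpleOrderSet _)
  rw [PIS_eq_coatomSupGraph]
  exact (coatomSupGraph.isoOfOrderIso e).neighborSet_injective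
    (coatomSupGraph.neighborSet_injective_of_three_le_card hι)

/-- In a product of at least three fields, distinct vertices of `PIS(R)` have
distinct open neighborhoods. -/
theorem pis_neighborSet_injective_of_fields {n : ℕ} (hn : 3 ≤ n)
    (F : Fin n → Type*) [∀ i, Field (F i)] :
    ∀ I J : {I : Ideal (∀ i, F i) // I ≠ ⊥ ∧ I ≠ ⊤}, I ≠ J →
      (PIS (∀ i, F i)).neighborSet I ≠ (PIS (∀ i, F i)).neighborSet J := by
  intro I J hIJ
  exact (PIS_neighborSet_injective_pi (by simpa using hn) F).ne hIJ
end

section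
/- Let F₁, F₂, F₃ be fields and R = F₁ × F₂ × F₃. Then the strong metric dimension of PIS(R) equals 3, and the set {F₁ × F₂ × (0), F₁ × (0) × F₃, (0) × F₂ × F₃} is a minimum strong resolving set. -/
open SimpleGraph

/-- `w` strongly resolves `u` and `v`. -/
def StronglyResolves {V : Type*} (G : SimpleGraph V) (w u v : V) : Prop :=
  G.dist w v = G.dist w u + G.dist u v ∨ G.dist w u = G.dist w v + G.dist v u

/-- A strong resolving set. -/
def IsStrongResolvingSet {V : Type*} (G : SimpleGraph V) (S : Set V) : Prop :=
  ∀ u v : V, u ≠ v → ∃ w ∈ S, StronglyResolves G w u v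

/-- The strong metric dimension. -/
noncomputable def sdim {V : Type*} (G : SimpleGraph V) : ℕ∞ :=
  ⨅ S : {S : Set V // IsStrongResolvingSet G S}, S.1.encard

/-- The ideal of a product of fields consisting of elements vanishing on `S`. -/
def vanishIdeal {n : ℕ} (F : Fin n → Type*) [∀ i, Field (F i)]
    (S : Set (Fin n)) : Ideal (∀ i, F i) where
  carrier := {x | ∀ i ∈ S, x i = 0}
  add_mem' ha hb i hi := by simp [ha i hi, hb i hi]
  zero_mem' i _ := rfl
  smul_mem' c x hx i hi := by simp [smul_eq_mul, Pi.mul_apply, hx i hi]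

/-! The ideals of `F₀ × F₁ × F₂` are exactly the ideals `vanishIdeal F S`, and such an ideal is
prime iff `S` is a singleton, so `PIS` lives on the nonempty proper subsets of `Fin 3`, two of them
being adjacent when they meet in a single point. The vertices are thus the three maximal ideals
`Mᵢ` (`S = {i}`) and the three minimal ideals `mᵢ` (`S = {i}ᶜ`): the `mᵢ` form a triangle, `Mᵢ` is
adjacent to `mⱼ` for `j ≠ i`, and the graph has diameter `2`.

A vertex strongly resolving a pair at distance equal to the diameter must be one of its endpoints,
so a strong resolving set meets each of the disjoint pairs `{Mᵢ, mᵢ}` and has at least three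
elements. Conversely `{M₀, M₁, M₂}` works: the only pairs it does not contain an endpoint of are
`{mᵢ, mⱼ}`, and `Mⱼ` resolves those because `Mⱼ – mᵢ – mⱼ` is a geodesic. -/

section StrongResolving

variable {V : Type*} {G : SimpleGraph V} {u v w : V}

lemma SimpleGraph.dist_eq_two_of_adj_of_adj (h₁ : G.Adj u w) (h₂ : G.Adj w v) (huv : u ≠ v)
    (hn : ¬ G.Adj u v) : G.dist u v = 2 := by
  have hle : G.dist u v ≤ 2 := G.dist_le (.cons h₁ (.cons h₂ .nil))
  have hpos : 0 < G.dist u v := Reachable.pos_dist_of_ne ⟨.cons h₁ (.cons h₂ .nil)⟩ huv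
  have hne : G.dist u v ≠ 1 := fun h => hn (dist_eq_one_iff_adj.mp h)
  omega

lemma stronglyResolves_left : StronglyResolves G u u v :=
  Or.inl (by rw [dist_self, zero_add])

lemma stronglyResolves_right : StronglyResolves G v u v :=
  Or.inr (by rw [dist_self, zero_add])

lemma StronglyResolves.eq_or_eq_of_dist_eq {k : ℕ}
    (hk : ∀ x y : V, ∃ p : G.Walk x y, p.length ≤ k) (huv : G.dist u v = k)
    (h : StronglyResolves G w u v) : w = u ∨ w = v := by
  by_contra! hw
  obtain ⟨p, hp⟩ := hk w u
  obtain ⟨q, hq⟩ := hk w v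
  have hwu : 0 < G.dist w u := Reachable.pos_dist_of_ne ⟨p⟩ hw.1
  have hwv : 0 < G.dist w v := Reachable.pos_dist_of_ne ⟨q⟩ hw.2
  have hu : G.dist w u ≤ k := (G.dist_le p).trans hp
  have hv : G.dist w v ≤ k := (G.dist_le q).trans hq
  have hvu : G.dist v u = k := dist_comm.trans huv
  rcases h with h | h <;> omega

lemma IsStrongResolvingSet.exists_mem_eq_or_eq_of_dist_eq {S : Set V} {k : ℕ}
    (hS : IsStrongResolvingSet G S) (hk : ∀ x y : V, ∃ p : G.Walk x y, p.length ≤ k)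
    (huv : u ≠ v) (hd : G.dist u v = k) : ∃ w ∈ S, w = u ∨ w = v := by
  obtain ⟨w, hwS, hw⟩ := hS u v huv
  exact ⟨w, hwS, hw.eq_or_eq_of_dist_eq hk hd⟩

lemma sdim_le {S : Set V} (hS : IsStrongResolvingSet G S) : sdim G ≤ S.encard :=
  iInf_le (fun S : {S : Set V // IsStrongResolvingSet G S} => S.1.encard) ⟨S, hS⟩

lemma le_sdim {k : ℕ∞} (h : ∀ S : Set V, IsStrongResolvingSet G S → k ≤ S.encard) :
    k ≤ sdim G :=
  le_iInf fun S => h S.1 S.2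

end StrongResolving

section VanishIdeal

variable {n : ℕ} (F : Fin n → Type*) [∀ i, Field (F i)]

lemma vanishIdeal_le_vanishIdeal_iff {S T : Set (Fin n)} :
    vanishIdeal F S ≤ vanishIdeal F T ↔ T ⊆ S := by
  classical
  refine ⟨fun h i hiT => ?_, fun hTS x hx i hiT => hx i (hTS hiT)⟩
  by_contra hiS
  have hsingle : (Pi.single i 1 : ∀ j, F j) ∈ vanishIdeal F S := fun j hj =>
    Pi.single_eq_of_ne (fun hji : j = i => hiS (hji ▸ hj)) 1
  simpa using h hsingle i hiT

lemma vanishIdeal_injective : Function.Injective (vanishIdeal F) := fun _ _ h =>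
  ((vanishIdeal_le_vanishIdeal_iff F).mp h.ge).antisymm
    ((vanishIdeal_le_vanishIdeal_iff F).mp h.le)

lemma vanishIdeal_empty : vanishIdeal F ∅ = ⊤ := by
  ext x
  simp [vanishIdeal]

lemma vanishIdeal_univ : vanishIdeal F Set.univ = ⊥ := by
  ext x
  simp [vanishIdeal, funext_iff]

lemma vanishIdeal_sup (S T : Set (Fin n)) :
    vanishIdeal F S ⊔ vanishIdeal F T = vanishIdeal F (S ∩ T) := by
  classical
  refine le_antisymm (sup_le ((vanishIdeal_le_vanishIdeal_iff F).mpr Set.inter_subset_left)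
    ((vanishIdeal_le_vanishIdeal_iff F).mpr Set.inter_subset_right)) fun x hx => ?_
  -- split `x` into its part off `S` and its part on `S`, which vanishes on `T`
  have hsplit : x = (fun i => if i ∈ S then 0 else x i) + fun i => if i ∈ S then x i else 0 := by
    funext i
    by_cases h : i ∈ S <;> simp [h]
  rw [hsplit]
  refine Submodule.add_mem_sup (fun i hi => by simp [hi]) fun i hiT => ?_
  by_cases h : i ∈ S
  · simpa [h] using hx i ⟨h, hiT⟩
  · simp [h]

lemma vanishIdeal_surjective : Function.Surjective (vanishIdeal F) := by
  intro I
  refine ⟨{i | ∀ x ∈ I, x i = 0}, le_antisymm (fun x hx => ?_) fun x hx i hi => hi x hx⟩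
  classical
  rw [← Finset.univ_sum_single x]
  refine Ideal.sum_mem _ fun i _ => ?_
  by_cases hxi : x i = 0
  · simp [hxi]
  · obtain ⟨y, hyI, hyi⟩ : ∃ y ∈ I, y i ≠ 0 := by
      by_contra! h
      exact hxi (hx i h)
    have hy : Pi.single i (x i) = Pi.single i (x i * (y i)⁻¹) * y := by
      rw [← Pi.single_mul_left, mul_assoc, inv_mul_cancel₀ hyi, mul_one]
    rw [hy]
    exact I.mul_mem_left _ hyI

lemma vanishIdeal_singleton (i : Fin n) :
    vanishIdeal F {i} = RingHom.ker (Pi.evalRingHom F i) := by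
  ext x
  simp [vanishIdeal]

lemma isPrime_vanishIdeal_iff {S : Set (Fin n)} :
    (vanishIdeal F S).IsPrime ↔ ∃ i, S = {i} := by
  classical
  constructor
  · intro hp
    obtain ⟨i, hi⟩ : S.Nonempty := by
      rw [Set.nonempty_iff_ne_empty]
      rintro rfl
      exact hp.ne_top (vanishIdeal_empty F)
    refine ⟨i, Set.eq_singleton_iff_unique_mem.mpr ⟨hi, fun j hj => ?_⟩⟩
    by_contra hji
    have hprod : (Pi.single j 1 : ∀ k, F k) * Pi.single i 1 ∈ vanishIdeal F S := by
      rw [← Pi.single_mul_left, Pi.single_eq_of_ne hji, mul_zero, Pi.single_zero]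
      exact zero_mem _
    rcases hp.mem_or_mem hprod with h | h
    · simpa using h j hj
    · simpa using h i hi
  · rintro ⟨i, rfl⟩
    rw [vanishIdeal_singleton]
    exact (RingHom.ker_isMaximal_of_surjective _ fun a =>
      ⟨Pi.single i a, Pi.single_eq_same i a⟩).isPrime

def vanishVertex (s : Finset (Fin n)) (hs : s.Nonempty) (hs' : s ≠ Finset.univ) :
    {I : Ideal (∀ i, F i) // I ≠ ⊥ ∧ I ≠ ⊤} :=
  ⟨vanishIdeal F s,
    by rwa [← vanishIdeal_univ F, (vanishIdeal_injective F).ne_iff, Ne, Finset.coe_eq_univ],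
    by rwa [← vanishIdeal_empty F, (vanishIdeal_injective F).ne_iff, ← Set.nonempty_iff_ne_empty,
      Finset.coe_nonempty]⟩

variable {F}

lemma vanishVertex_inj {s t : Finset (Fin n)} {hs : s.Nonempty} {hs' : s ≠ Finset.univ}
    {ht : t.Nonempty} {ht' : t ≠ Finset.univ} :
    vanishVertex F s hs hs' = vanishVertex F t ht ht' ↔ s = t := by
  rw [vanishVertex, vanishVertex, Subtype.mk.injEq, (vanishIdeal_injective F).eq_iff,
    Finset.coe_inj]

lemma exists_eq_vanishVertex (v : {I : Ideal (∀ i, F i) // I ≠ ⊥ ∧ I ≠ ⊤}) :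
    ∃ s hs hs', v = vanishVertex F s hs hs' := by
  obtain ⟨S, hS⟩ := vanishIdeal_surjective F v.1
  have hfin : S.toFinite.toFinset = S := S.toFinite.coe_toFinset
  refine ⟨S.toFinite.toFinset, ?_, ?_, Subtype.ext ?_⟩
  · rw [← Finset.coe_nonempty, hfin, Set.nonempty_iff_ne_empty]
    rintro rfl
    exact v.2.2 (hS ▸ vanishIdeal_empty F)
  · rw [Ne, ← Finset.coe_eq_univ, hfin]
    rintro rfl
    exact v.2.1 (hS ▸ vanishIdeal_univ F)
  · simp only [vanishVertex, hfin, hS]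

lemma pis_adj_vanishVertex_iff {s t : Finset (Fin n)} {hs : s.Nonempty}
    {hs' : s ≠ Finset.univ} {ht : t.Nonempty} {ht' : t ≠ Finset.univ} :
    (PIS (∀ i, F i)).Adj (vanishVertex F s hs hs') (vanishVertex F t ht ht') ↔
      s ≠ t ∧ ∃ i, s ∩ t = {i} := by
  change vanishVertex F s hs hs' ≠ vanishVertex F t ht ht' ∧
    (vanishIdeal F s + vanishIdeal F t).IsPrime ↔ _
  rw [Ne, vanishVertex_inj, Submodule.add_eq_sup, vanishIdeal_sup, ← Finset.coe_inter,
    isPrime_vanishIdeal_iff]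
  simp only [Finset.coe_eq_singleton]

end VanishIdeal

section ThreeFields

variable {F : Fin 3 → Type*} [∀ i, Field (F i)]

variable (F) in
def maximalVertex (i : Fin 3) : {I : Ideal (∀ i, F i) // I ≠ ⊥ ∧ I ≠ ⊤} :=
  vanishVertex F {i} (Finset.singleton_nonempty i) (by revert i; decide)

variable (F) in
def minimalVertex (i : Fin 3) : {I : Ideal (∀ i, F i) // I ≠ ⊥ ∧ I ≠ ⊤} :=
  vanishVertex F {i}ᶜ (by revert i; decide) (by revert i; decide)

lemma val_maximalVertex (i : Fin 3) : (maximalVertex F i).1 = vanishIdeal F {i} :=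
  congrArg (vanishIdeal F) (Finset.coe_singleton i)

lemma eq_maximalVertex_or_eq_minimalVertex (v : {I : Ideal (∀ i, F i) // I ≠ ⊥ ∧ I ≠ ⊤}) :
    (∃ i, v = maximalVertex F i) ∨ ∃ i, v = minimalVertex F i := by
  obtain ⟨s, hs, hs', rfl⟩ := exists_eq_vanishVertex v
  have hcases : ∀ s : Finset (Fin 3), s.Nonempty → s ≠ Finset.univ →
      (∃ i, s = {i}) ∨ ∃ i, s = {i}ᶜ := by decide
  rcases hcases s hs hs' with ⟨i, rfl⟩ | ⟨i, rfl⟩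
  · exact Or.inl ⟨i, rfl⟩
  · exact Or.inr ⟨i, rfl⟩

lemma maximalVertex_injective : Function.Injective (maximalVertex F) := by
  intro i j h
  rwa [maximalVertex, maximalVertex, vanishVertex_inj, Finset.singleton_inj] at h

lemma minimalVertex_injective : Function.Injective (minimalVertex F) := by
  intro i j h
  rwa [minimalVertex, minimalVertex, vanishVertex_inj, compl_inj_iff, Finset.singleton_inj] at h

lemma maximalVertex_ne_minimalVertex (i j : Fin 3) : maximalVertex F i ≠ minimalVertex F j := by
  rw [maximalVertex, minimalVertex, Ne, vanishVertex_inj]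
  revert i j
  decide

lemma pis_adj_maximalVertex_minimalVertex_iff {i j : Fin 3} :
    (PIS (∀ i, F i)).Adj (maximalVertex F i) (minimalVertex F j) ↔ i ≠ j := by
  rw [maximalVertex, minimalVertex, pis_adj_vanishVertex_iff]
  revert i j
  decide

lemma pis_adj_minimalVertex_iff {i j : Fin 3} :
    (PIS (∀ i, F i)).Adj (minimalVertex F i) (minimalVertex F j) ↔ i ≠ j := by
  rw [minimalVertex, minimalVertex, pis_adj_vanishVertex_iff]
  revert i j
  decide

lemma exists_ne_ne (i j : Fin 3) : ∃ k, k ≠ i ∧ k ≠ j := by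
  revert i j
  decide

lemma pis_dist_maximalVertex_minimalVertex_self (i : Fin 3) :
    (PIS (∀ i, F i)).dist (maximalVertex F i) (minimalVertex F i) = 2 := by
  obtain ⟨j, hji, -⟩ := exists_ne_ne i i
  exact dist_eq_two_of_adj_of_adj (pis_adj_maximalVertex_minimalVertex_iff.mpr hji.symm)
    (pis_adj_minimalVertex_iff.mpr hji) (maximalVertex_ne_minimalVertex i i)
    fun h => pis_adj_maximalVertex_minimalVertex_iff.mp h rfl

lemma pis_exists_walk_maximalVertex_minimalVertex (i j : Fin 3) :
    ∃ p : (PIS (∀ i, F i)).Walk (maximalVertex F i) (minimalVertex F j), p.length ≤ 2 := by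
  obtain ⟨k, hki, hkj⟩ := exists_ne_ne i j
  exact ⟨.cons (pis_adj_maximalVertex_minimalVertex_iff.mpr hki.symm)
    (.cons (pis_adj_minimalVertex_iff.mpr hkj) .nil), le_rfl⟩

lemma pis_exists_walk_length_le_two (u v : {I : Ideal (∀ i, F i) // I ≠ ⊥ ∧ I ≠ ⊤}) :
    ∃ p : (PIS (∀ i, F i)).Walk u v, p.length ≤ 2 := by
  rcases eq_maximalVertex_or_eq_minimalVertex u with ⟨i, rfl⟩ | ⟨i, rfl⟩ <;>
    rcases eq_maximalVertex_or_eq_minimalVertex v with ⟨j, rfl⟩ | ⟨j, rfl⟩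
  · obtain ⟨k, hki, hkj⟩ := exists_ne_ne i j
    exact ⟨.cons (pis_adj_maximalVertex_minimalVertex_iff.mpr hki.symm)
      (.cons (pis_adj_maximalVertex_minimalVertex_iff.mpr hkj.symm).symm .nil), le_rfl⟩
  · exact pis_exists_walk_maximalVertex_minimalVertex i j
  · obtain ⟨p, hp⟩ := pis_exists_walk_maximalVertex_minimalVertex (F := F) j i
    exact ⟨p.reverse, by rwa [Walk.length_reverse]⟩
  · obtain rfl | hij := eq_or_ne i j
    · exact ⟨.nil, Nat.zero_le _⟩
    · exact ⟨.cons (pis_adj_minimalVertex_iff.mpr hij) .nil, by simp⟩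

lemma isStrongResolvingSet_range_maximalVertex :
    IsStrongResolvingSet (PIS (∀ i, F i)) (Set.range (maximalVertex F)) := by
  intro u v huv
  rcases eq_maximalVertex_or_eq_minimalVertex u with ⟨i, rfl⟩ | ⟨i, rfl⟩
  · exact ⟨_, Set.mem_range_self i, stronglyResolves_left⟩
  rcases eq_maximalVertex_or_eq_minimalVertex v with ⟨j, rfl⟩ | ⟨j, rfl⟩
  · exact ⟨_, Set.mem_range_self j, stronglyResolves_right⟩
  have hij : i ≠ j := fun h => huv (congrArg _ h)
  refine ⟨_, Set.mem_range_self j, Or.inl ?_⟩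
  rw [pis_dist_maximalVertex_minimalVertex_self,
    dist_eq_one_iff_adj.mpr (pis_adj_maximalVertex_minimalVertex_iff.mpr hij.symm),
    dist_eq_one_iff_adj.mpr (pis_adj_minimalVertex_iff.mpr hij)]

lemma encard_range_maximalVertex : (Set.range (maximalVertex F)).encard = 3 := by
  rw [← Set.image_univ, maximalVertex_injective.encard_image, Set.encard_univ,
    ENat.card_eq_coe_fintype_card, Fintype.card_fin]
  rfl

lemma image_val_range_maximalVertex :
    Subtype.val '' Set.range (maximalVertex F) =
      {vanishIdeal F {2}, vanishIdeal F {1}, vanishIdeal F {0}} := by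
  ext I
  simp only [← Set.range_comp, Set.mem_range, Function.comp_apply, val_maximalVertex,
    Fin.exists_fin_succ, IsEmpty.exists_iff, or_false, Set.mem_insert_iff, Set.mem_singleton_iff]
  constructor <;> rintro (rfl | rfl | rfl) <;> simp

lemma three_le_encard_of_isStrongResolvingSet {S : Set {I : Ideal (∀ i, F i) // I ≠ ⊥ ∧ I ≠ ⊤}}
    (hS : IsStrongResolvingSet (PIS (∀ i, F i)) S) : 3 ≤ S.encard := by
  have hmeet (i : Fin 3) : ∃ w ∈ S, w = maximalVertex F i ∨ w = minimalVertex F i :=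
    hS.exists_mem_eq_or_eq_of_dist_eq pis_exists_walk_length_le_two
      (maximalVertex_ne_minimalVertex i i) (pis_dist_maximalVertex_minimalVertex_self i)
  choose w hwS hw using hmeet
  have hinj : Function.Injective w := by
    intro i j hij
    rcases hw i with hi | hi <;> rcases hw j with hj | hj <;> rw [hi, hj] at hij
    · exact maximalVertex_injective hij
    · exact absurd hij (maximalVertex_ne_minimalVertex i j)
    · exact absurd hij.symm (maximalVertex_ne_minimalVertex j i)
    · exact minimalVertex_injective hij
  calc (3 : ℕ∞) = ENat.card (Fin 3) := by simp
    _ ≤ (Set.range w).encard := hinj.encard_range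
    _ ≤ S.encard := Set.encard_le_encard (Set.range_subset_iff.mpr hwS)

end ThreeFields

/-- For `R = F₁ × F₂ × F₃`, `sdim (PIS R) = 3`, and
`{F₁ × F₂ × (0), F₁ × (0) × F₃, (0) × F₂ × F₃}` is a minimum strong
resolving set. -/
theorem pis_sdim_three_fields (F : Fin 3 → Type*) [∀ i, Field (F i)] :
    sdim (PIS (∀ i, F i)) = 3 ∧
    ∃ S : Set {I : Ideal (∀ i, F i) // I ≠ ⊥ ∧ I ≠ ⊤},
      Subtype.val '' S =
        {vanishIdeal F {2}, vanishIdeal F {1}, vanishIdeal F {0}} ∧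
      IsStrongResolvingSet (PIS (∀ i, F i)) S ∧
      S.encard = sdim (PIS (∀ i, F i)) := by
  have hres := isStrongResolvingSet_range_maximalVertex (F := F)
  have hsdim : sdim (PIS (∀ i, F i)) = 3 :=
    le_antisymm ((sdim_le hres).trans_eq encard_range_maximalVertex)
      (le_sdim fun _ => three_le_encard_of_isStrongResolvingSet)
  exact ⟨hsdim, Set.range (maximalVertex F), image_val_range_maximalVertex, hres,
    by rw [encard_range_maximalVertex, hsdim]⟩
end
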